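/- Suppose a ≥ 1 and b < 1/a. Then the supremum of Rs(P1,P2) over all P1 ≥ 0 and P2 ≥ 0 equals (1/2)·log₂(1/(a·b)). -/

import Mathlib

/-- `g x = (1/2) * log_2 (1 + x)`. -/
noncomputable def g (x : ℝ) : ℝ := (1 / 2) * Real.logb 2 (1 + x)

/-- The achievable secrecy rate `Rs(P1, P2)` for the Gaussian wiretap channel with a
helping interferer, with channel gains `a`, `b` and powers `P1`, `P2`. -/
noncomputable def Rs (a b P1 P2 : ℝ) : ℝ :=
  if 1 + P2 ≤ a then 0
  else if 1 ≤ a then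
    -- case `1 ≤ a < 1 + P2`
    if 1 + P1 ≤ b then g P1 - g (a * P1 / (1 + P2))
    else if 1 ≤ b then max 0 (g (P1 + b * P2) - g (a * P1 + P2))
    else max 0 (g (P1 / (1 + b * P2)) - g (a * P1 / (1 + P2)))
  else
    -- case `a < 1`, with `β1 = (1+P1)/(1+a*P1)` and `β2 = a*(1+P1)/(1+a*P1+(1-a)*P2)`
    if 1 + P1 ≤ b then g P1 - g (a * P1 / (1 + P2))
    else if (1 + P1) / (1 + a * P1) ≤ b then g (P1 + b * P2) - g (a * P1 + P2)
    else if a * (1 + P1) / (1 + a * P1 + (1 - a) * P2) ≤ b then g P1 - g (a * P1)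
    else g (P1 / (1 + b * P2)) - g (a * P1 / (1 + P2))

/-!
For `1 ≤ a` and `a * b < 1` we have `b < 1`, so whenever `Rs` is nonzero it is
`max 0 (g (P1 / (1 + b P2)) - g (a P1 / (1 + P2)))`, i.e. half the binary logarithm of the ratio
`(1 + P1 / (1 + b P2)) / (1 + a P1 / (1 + P2))`. This ratio never exceeds `1 / (a b)`, and it tends
to `1 / (a b)` along `P1 = t ^ 2`, `P2 = t`, where both interference terms dominate their noise.
-/

open Filter Topology

lemma g_sub_g {x y : ℝ} (hx : -1 < x) (hy : -1 < y) :
    g x - g y = (1 / 2) * Real.logb 2 ((1 + x) / (1 + y)) := by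
  rw [g, g, Real.logb_div (by linarith) (by linarith)]
  ring

lemma one_add_div_div_one_add_div_le {a b P1 P2 : ℝ} (ha : 0 < a) (hb : 0 < b)
    (hab : a * b ≤ 1) (hb1 : b ≤ 1) (hP1 : 0 ≤ P1) (hP2 : 0 ≤ P2) :
    (1 + P1 / (1 + b * P2)) / (1 + a * P1 / (1 + P2)) ≤ 1 / (a * b) := by
  have h1 : 0 < 1 + b * P2 := by positivity
  have h2 : 0 < 1 + P2 := by positivity
  rw [one_add_div h1.ne', one_add_div h2.ne', div_div_div_eq,
    div_le_div_iff₀ (by positivity) (by positivity)]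
  -- the difference of the two sides is `(1 - ab)(1 + bP2)(1 + P2) + aP1(1 - b)`
  nlinarith [mul_nonneg (sub_nonneg.2 hab) (mul_pos h1 h2).le,
    mul_nonneg (mul_nonneg ha.le hP1) (sub_nonneg.2 hb1)]

lemma g_sub_g_le_half_logb {a b P1 P2 : ℝ} (ha : 0 < a) (hb : 0 < b)
    (hab : a * b ≤ 1) (hb1 : b ≤ 1) (hP1 : 0 ≤ P1) (hP2 : 0 ≤ P2) :
    g (P1 / (1 + b * P2)) - g (a * P1 / (1 + P2)) ≤ (1 / 2) * Real.logb 2 (1 / (a * b)) := by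
  rw [g_sub_g (by linarith [show 0 ≤ P1 / (1 + b * P2) by positivity])
    (by linarith [show 0 ≤ a * P1 / (1 + P2) by positivity])]
  have := one_add_div_div_one_add_div_le ha hb hab hb1 hP1 hP2
  have := Real.logb_le_logb_of_le one_lt_two (by positivity) this
  linarith

lemma half_logb_inv_nonneg {a b : ℝ} (hab0 : 0 < a * b) (hab : a * b ≤ 1) :
    0 ≤ (1 / 2) * Real.logb 2 (1 / (a * b)) := by
  have : 1 ≤ 1 / (a * b) := by rw [le_div_iff₀ hab0]; linarith
  have := Real.logb_nonneg one_lt_two this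
  positivity

lemma Rs_le_half_logb {a b P1 P2 : ℝ} (ha : 1 ≤ a) (hb : 0 < b) (hab : a * b < 1)
    (hP1 : 0 ≤ P1) (hP2 : 0 ≤ P2) :
    Rs a b P1 P2 ≤ (1 / 2) * Real.logb 2 (1 / (a * b)) := by
  have hb1 : b < 1 := by nlinarith
  have hL := half_logb_inv_nonneg (by positivity) hab.le
  unfold Rs
  split_ifs <;> first
    | exact hL
    | linarith
    | exact max_le hL (g_sub_g_le_half_logb (by linarith) hb hab.le hb1.le hP1 hP2)

lemma Rs_sq_self {a b t : ℝ} (ha : 1 ≤ a) (hb : b < 1) (hat : a ≤ t) :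
    Rs a b (t ^ 2) t = max 0 (g (t ^ 2 / (1 + b * t)) - g (a * t ^ 2 / (1 + t))) := by
  rw [Rs, if_neg (by linarith), if_pos ha, if_neg (by nlinarith), if_neg (by linarith)]

lemma tendsto_one_add_div_div_one_add_div {a b : ℝ} (ha : 0 < a) (hb : 0 < b) :
    Tendsto (fun t : ℝ => (1 + t ^ 2 / (1 + b * t)) / (1 + a * t ^ 2 / (1 + t))) atTop
      (𝓝 (1 / (a * b))) := by
  -- in the variable `u = t⁻¹` the ratio is a rational function, continuous at `u = 0`
  set F : ℝ → ℝ := fun u => (u ^ 2 + b * u + 1) * (u + 1) / ((u + b) * (u ^ 2 + u + a))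
  have hF : ContinuousAt F 0 := by
    refine ContinuousAt.div (by fun_prop) (by fun_prop) ?_
    positivity
  have hF0 : F 0 = 1 / (a * b) := by simp only [F]; field_simp; ring
  rw [← hF0]
  refine (hF.tendsto.comp tendsto_inv_atTop_zero).congr' ?_
  filter_upwards [eventually_gt_atTop 0] with t ht
  simp only [Function.comp_apply, F]
  field_simp

lemma tendsto_g_sub_g {a b : ℝ} (ha : 0 < a) (hb : 0 < b) :
    Tendsto (fun t : ℝ => g (t ^ 2 / (1 + b * t)) - g (a * t ^ 2 / (1 + t))) atTop
      (𝓝 ((1 / 2) * Real.logb 2 (1 / (a * b)))) := by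
  have hlogb : ContinuousAt (fun x => (1 / 2) * Real.logb 2 x) (1 / (a * b)) :=
    continuousAt_const.mul (Real.continuousAt_logb (by positivity))
  refine (hlogb.tendsto.comp (tendsto_one_add_div_div_one_add_div ha hb)).congr' ?_
  filter_upwards [eventually_ge_atTop 0] with t ht
  rw [Function.comp_apply, g_sub_g (by linarith [show 0 ≤ t ^ 2 / (1 + b * t) by positivity])
    (by linarith [show 0 ≤ a * t ^ 2 / (1 + t) by positivity])]

/-- If `a ≥ 1` and `0 < b < 1/a`, the supremum of `Rs(P1,P2)` over all `P1 ≥ 0`, `P2 ≥ 0`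
equals `(1/2) log₂ (1/(a b))`. -/
theorem stmt1 (a b : ℝ) (ha : 1 ≤ a) (hb0 : 0 < b) (hb : b < 1 / a) :
    IsLUB {r : ℝ | ∃ P1 P2 : ℝ, 0 ≤ P1 ∧ 0 ≤ P2 ∧ r = Rs a b P1 P2}
      ((1 / 2) * Real.logb 2 (1 / (a * b))) := by
  have ha0 : 0 < a := by linarith
  have hab : a * b < 1 := by rwa [lt_div_iff₀ ha0, mul_comm] at hb
  have hb1 : b < 1 := by nlinarith
  refine ⟨?_, fun c hc => ?_⟩
  · rintro r ⟨P1, P2, hP1, hP2, rfl⟩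
    exact Rs_le_half_logb ha hb0 hab hP1 hP2
  · refine le_of_tendsto (tendsto_g_sub_g ha0 hb0) ?_
    filter_upwards [eventually_ge_atTop a] with t hat
    calc _ ≤ Rs a b (t ^ 2) t := by rw [Rs_sq_self ha hb1 hat]; exact le_max_right _ _
      _ ≤ c := hc ⟨t ^ 2, t, sq_nonneg t, by linarith, rfl⟩
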